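/- arXiv:math-ph/9809010 — 3 statements merged into one kernel-verified Lean document; each statement's English description precedes it below -/
import Mathlib

section
/- There exists an infinite square-free word over a three-letter alphabet. -/
/-- The Thue–Morse sequence: parity of the binary digit sum. -/
private def tm (n : ℕ) : Bool := (Nat.digits 2 n).sum % 2 == 1

private lemma tm_two_mul (n : ℕ) : tm (2 * n) = tm n := by
  rcases Nat.eq_zero_or_pos n with h | h
  · simp [h]
  · unfold tm
    rw [Nat.digits_def' (by norm_num : 1 < 2) (by omega)]
    have h1 : 2 * n % 2 = 0 := by omega
    have h2 : 2 * n / 2 = n := by omega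
    rw [h1, h2]
    simp

private lemma tm_two_mul_add_one (n : ℕ) : tm (2 * n + 1) = !tm n := by
  unfold tm
  rw [Nat.digits_def' (by norm_num : 1 < 2) (by omega)]
  have h1 : (2 * n + 1) % 2 = 1 := by omega
  have h2 : (2 * n + 1) / 2 = n := by omega
  rw [h1, h2]
  rcases Nat.mod_two_eq_zero_or_one (Nat.digits 2 n).sum with h | h <;>
    simp [List.sum_cons, Nat.add_mod, h]

private lemma tm_no_three (k : ℕ) (h1 : tm k = tm (k+1)) (h2 : tm (k+1) = tm (k+2)) : False := by
  rcases Nat.even_or_odd k with ⟨a, ha⟩ | ⟨a, ha⟩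
  · have e1 : tm k = tm a := by rw [show k = 2*a by omega, tm_two_mul]
    have e2 : tm (k+1) = !tm a := by rw [show k+1 = 2*a+1 by omega, tm_two_mul_add_one]
    rw [e1, e2] at h1
    cases tm a <;> simp_all
  · have e2 : tm (k+1) = tm (a+1) := by rw [show k+1 = 2*(a+1) by omega, tm_two_mul]
    have e3 : tm (k+2) = !tm (a+1) := by rw [show k+2 = 2*(a+1)+1 by omega, tm_two_mul_add_one]
    rw [e2, e3] at h2
    cases tm (a+1) <;> simp_all

/-- Thue–Morse is overlap-free. -/
private lemma tm_overlapfree : ∀ n, 0 < n → ∀ i, ¬ (∀ j ≤ n, tm (i+j) = tm (i+n+j)) := by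
  intro n
  induction n using Nat.strong_induction_on with
  | _ n ih =>
    intro hn i h
    rcases Nat.even_or_odd n with ⟨m, hm⟩ | ⟨m, hm⟩
    · -- n = m + m, even
      have hm1 : 0 < m := by omega
      apply ih m (by omega) hm1 (i / 2)
      intro j hj
      rcases Nat.even_or_odd i with ⟨k0, hk0⟩ | ⟨k0, hk0⟩
      · have hk : i / 2 = k0 := by omega
        have hh := h (2*j) (by omega)
        rw [show i + 2*j = 2*(k0 + j) by omega,
            show i + n + 2*j = 2*(k0 + m + j) by omega,
            tm_two_mul, tm_two_mul] at hh
        rw [hk]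
        exact hh
      · have hk : i / 2 = k0 := by omega
        have hh := h (2*j) (by omega)
        rw [show i + 2*j = 2*(k0 + j) + 1 by omega,
            show i + n + 2*j = 2*(k0 + m + j) + 1 by omega,
            tm_two_mul_add_one, tm_two_mul_add_one] at hh
        rw [hk]
        exact Bool.not_inj hh
    · -- n = 2m+1, odd
      rcases Nat.eq_zero_or_pos m with hm0 | hm0
      · -- n = 1
        have h0 := h 0 (by omega)
        have h1 := h 1 (by omega)
        rw [show i + 0 = i by omega, show i + n + 0 = i + 1 by omega] at h0
        rw [show i + n + 1 = i + 2 by omega] at h1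
        exact tm_no_three i h0 h1
      · rcases Nat.even_or_odd i with ⟨k0, hk0⟩ | ⟨k0, hk0⟩
        · -- i even
          have A : ∀ s, 2*s + 1 ≤ n → tm (k0 + m + s) = tm (k0 + m + s + 1) := by
            intro s hs
            have ha := h (2*s) (by omega)
            have hb := h (2*s+1) (by omega)
            rw [show i + 2*s = 2*(k0+s) by omega,
                show i + n + 2*s = 2*(k0+m+s)+1 by omega,
                tm_two_mul, tm_two_mul_add_one] at ha
            rw [show i + (2*s+1) = 2*(k0+s)+1 by omega,
                show i + n + (2*s+1) = 2*(k0+m+s+1) by omega,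
                tm_two_mul_add_one, tm_two_mul] at hb
            rw [ha, Bool.not_not] at hb
            exact hb
          have hA0 := A 0 (by omega)
          have hA1 := A 1 (by omega)
          rw [show k0 + m + 0 = k0 + m by omega] at hA0
          rw [show k0 + m + 1 + 1 = k0 + m + 2 by omega] at hA1
          exact tm_no_three (k0 + m) (by rw [show k0+m+0+1 = k0+m+1 by omega] at hA0; exact hA0) hA1
        · -- i odd
          have B : ∀ s, 2*s + 1 ≤ n → tm (k0 + s) = tm (k0 + s + 1) := by
            intro s hs
            have ha := h (2*s) (by omega)
            have hb := h (2*s+1) (by omega)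
            rw [show i + 2*s = 2*(k0+s)+1 by omega,
                show i + n + 2*s = 2*(k0+m+s+1) by omega,
                tm_two_mul_add_one, tm_two_mul] at ha
            rw [show i + (2*s+1) = 2*(k0+s+1) by omega,
                show i + n + (2*s+1) = 2*(k0+m+s+1)+1 by omega,
                tm_two_mul, tm_two_mul_add_one] at hb
            rw [← ha, Bool.not_not] at hb
            exact hb.symm
          have hB0 := B 0 (by omega)
          have hB1 := B 1 (by omega)
          rw [show k0 + 0 = k0 by omega, show k0 + 0 + 1 = k0 + 1 by omega] at hB0
          rw [show k0 + 1 + 1 = k0 + 2 by omega] at hB1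
          exact tm_no_three k0 hB0 hB1

private def sfw (n : ℕ) : Fin 3 :=
  ⟨(tm (n+1)).toNat + 1 - (tm n).toNat, by
    have := Bool.toNat_lt (tm n)
    have := Bool.toNat_lt (tm (n+1))
    omega⟩

/-- Thue's theorem: there exists an infinite square-free word over a three-letter
alphabet, i.e. an infinite word containing no nonempty factor of the form `uu`. -/
theorem exists_infinite_squarefree_word :
    ∃ w : ℕ → Fin 3, ∀ i n : ℕ, 0 < n → ∃ j < n, w (i + j) ≠ w (i + n + j) := by
  refine ⟨sfw, ?_⟩
  intro i n hn
  by_contra hc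
  push_neg at hc
  have key : ∀ j ≤ n, (tm (i+j)).toNat + (tm (i+n)).toNat
      = (tm (i+n+j)).toNat + (tm i).toNat := by
    intro j hj
    induction j with
    | zero => simp; omega
    | succ j ihj =>
      have ihj' := ihj (by omega)
      have hw := hc j (by omega)
      have hv := congrArg Fin.val hw
      simp only [sfw] at hv
      have b1 := Bool.toNat_lt (tm (i+j))
      have b2 := Bool.toNat_lt (tm (i+j+1))
      have b3 := Bool.toNat_lt (tm (i+n+j))
      have b4 := Bool.toNat_lt (tm (i+n+j+1))
      rw [show i + (j+1) = i+j+1 by omega, show i + n + (j+1) = i+n+j+1 by omega]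
      omega
  by_cases hab : tm i = tm (i+n)
  · apply tm_overlapfree n hn i
    intro j hj
    have hk := key j hj
    rw [hab] at hk
    have h' : (tm (i+j)).toNat = (tm (i+n+j)).toNat := by omega
    cases h1 : tm (i+j) <;> cases h2 : tm (i+n+j) <;> simp [h1, h2] at h' ⊢
  · have k1 := key n le_rfl
    have b5 := Bool.toNat_lt (tm (i+n+n))
    cases h1 : tm i <;> cases h2 : tm (i+n) <;> simp [h1, h2] at hab k1 ; omega
end

section
/- For x ≥ 3, the entropy of square-free words over x letters satisfies s⁻(x) ≥ (1/3)·log(x-2). In particular it is strictly positive for x > 3. -/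
/-- A word (list) is square-free if it contains no nonempty factor of the form `u ++ u`. -/
def SqFree {α : Type*} (l : List α) : Prop :=
  ∀ u : List α, u ≠ [] → ¬ (u ++ u) <:+: l

/-- The number of square-free words of length `n` over an alphabet of `x` letters. -/
noncomputable def sqFreeCount (x n : ℕ) : ℕ :=
  Nat.card {l : List (Fin x) // l.length = n ∧ SqFree l}

open Filter

/-!
Coding the factors `00, 11, 01, 10` of the Thue–Morse word by `0, 0, 1, 2` gives an infinite
square-free word `w` over three letters, because the Thue–Morse word is overlap-free. Cut a prefix
of `w` of length `2m` into `m` blocks of two letters and insert into each block, before or after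
its second letter, one of `x - 3` fresh letters. Fresh letters are never
adjacent, and erasing them from a square leaves a square in `w`; so all `(2(x - 3))^m ≥ (x - 2)^m`
words of length `3m` obtained this way are square-free, whence `s⁻(x) ≥ log (x - 2) / 3`.
-/

open Function

variable {α β γ : Type*}

theorem SqFree.map {f : α → β} (hf : Injective f) {l : List α} (hl : SqFree l) :
    SqFree (l.map f) := by
  rcases l with _ | ⟨a, _⟩
  · intro u hu h
    exact hu (List.append_eq_nil_iff.mp (List.eq_nil_of_infix_nil h)).1
  · have : Nonempty α := ⟨a⟩
    intro u hu h
    refine hl (u.map (invFun f)) (by simpa using hu) ?_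
    simpa [List.map_map, invFun_comp hf, leftInverse_invFun hf _] using h.map (invFun f)

/-- Erasing the letters on which `f` is `none` from a square `u u` leaves a square, which is empty
only if `u` consists of erased letters, and then two erased letters are adjacent. -/
theorem SqFree.of_filterMap {f : α → Option γ} {l : List α} (hf : SqFree (l.filterMap f))
    (hl : l.IsChain fun a b => (f a).isSome ∨ (f b).isSome) : SqFree l := by
  intro u hu h
  by_cases hu' : u.filterMap f = []
  · obtain ⟨a, v, rfl⟩ := List.exists_cons_of_ne_nil hu
    have hnone : ∀ b ∈ a :: v, f b = none := List.filterMap_eq_nil_iff.mp hu'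
    obtain ⟨b, w, hbw⟩ := List.exists_cons_of_ne_nil (l := v ++ a :: v) (by simp)
    have hchain := hl.infix h
    rw [List.cons_append, hbw, List.isChain_cons_cons] at hchain
    have hb : b ∈ a :: v := (List.mem_append.mp (hbw ▸ List.mem_cons_self)).elim
      (List.mem_cons_of_mem a) id
    simp [hnone a List.mem_cons_self, hnone b hb] at hchain
  · exact hf _ hu' (by simpa only [List.filterMap_append] using h.filterMap f)

def SqFreeSeq (w : ℕ → α) : Prop :=
  ∀ i k, 0 < k → ∃ j < k, w (i + j) ≠ w (i + k + j)

/-- `w` has no overlap `a v a v a`, i.e. no factor of length `2k + 1` and period `k > 0`. -/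
def OverlapFreeSeq (w : ℕ → α) : Prop :=
  ∀ i k, 0 < k → ∃ j ≤ k, w (i + j) ≠ w (i + k + j)

theorem SqFreeSeq.sqFree_map_range {w : ℕ → α} (hw : SqFreeSeq w) (n : ℕ) :
    SqFree ((List.range n).map w) := by
  intro u hu h
  obtain ⟨p, hp, hget⟩ := List.infix_iff_getElem?.mp h
  simp only [List.length_map, List.length_range, List.length_append] at hp hget
  have hw' : ∀ i < u.length + u.length, some (w (p + i)) = (u ++ u)[i]? := by
    intro i hi
    have := hget i hi
    rw [List.getElem?_map, List.getElem?_range (by omega)] at this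
    rw [List.getElem?_eq_getElem (by simpa using hi), ← this, add_comm]
    rfl
  obtain ⟨j, hj, hne⟩ := hw p u.length (List.length_pos_iff.mpr hu)
  refine hne (Option.some_injective _ ?_)
  rw [hw' j (by omega), add_assoc, add_comm u.length j, hw' (j + u.length) (by omega),
    List.getElem?_append_left hj, List.getElem?_append_right (by omega), Nat.add_sub_cancel]

theorem apply_add_eq_of_forall_succ_eq {f : ℕ → α} {i k : ℕ}
    (h : ∀ j < k, f (i + j + 1) = f (i + j)) : f (i + k) = f i := by
  induction k with
  | zero => rfl
  | succ k ih => rw [← add_assoc, h k k.lt_succ_self, ih fun j hj => h j (by omega)]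

theorem apply_add_eq_xor_bodd_of_forall_succ_ne {f : ℕ → Bool} {i k : ℕ}
    (h : ∀ j < k, f (i + j + 1) ≠ f (i + j)) : f (i + k) = (f i ^^ k.bodd) := by
  induction k with
  | zero => simp
  | succ k ih =>
    rw [← add_assoc, Bool.eq_not_of_ne (h k k.lt_succ_self), ih fun j hj => h j (by omega),
      Nat.bodd_succ]
    cases f i <;> simp

def pairCode (f : ℕ → Bool) (n : ℕ) : Fin 3 :=
  if f n = f (n + 1) then 0 else if f (n + 1) then 1 else 2

theorem pairCode_eq_iff_succ_eq {f : ℕ → Bool} {n m : ℕ} (h : pairCode f n = pairCode f m) :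
    f n = f m ↔ f (n + 1) = f (m + 1) := by
  unfold pairCode at h
  generalize f n = a, f (n + 1) = b, f m = c, f (m + 1) = d at h ⊢
  revert a b c d
  decide

theorem pairCode_eq_succ_of_ne {f : ℕ → Bool} {n m : ℕ} (h : pairCode f n = pairCode f m)
    (hne : f n ≠ f m) : f (n + 1) = f n := by
  unfold pairCode at h
  generalize f n = a, f (n + 1) = b, f m = c, f (m + 1) = d at h hne ⊢
  revert a b c d
  decide

/-- A square `v v` of codes forces `f (i + j) = f (i + k + j)` either for all `j ≤ k` (an
overlap) or for none, and in the latter case `f` is constant on `[i, i + k]`. -/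
theorem OverlapFreeSeq.sqFreeSeq_pairCode {f : ℕ → Bool} (hf : OverlapFreeSeq f) :
    SqFreeSeq (pairCode f) := by
  intro i k hk
  by_contra! H
  have hinv : ∀ j ≤ k, (f (i + j) = f (i + k + j) ↔ f i = f (i + k)) := by
    intro j hj
    induction j with
    | zero => simp
    | succ j ih => exact (pairCode_eq_iff_succ_eq (H j (by omega))).symm.trans (ih (by omega))
  by_cases h0 : f i = f (i + k)
  · obtain ⟨j, hj, hne⟩ := hf i k hk
    exact hne ((hinv j hj).2 h0)
  · refine h0 (apply_add_eq_of_forall_succ_eq fun j hj => ?_).symm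
    exact pairCode_eq_succ_of_ne (H j hj) fun h => h0 ((hinv j hj.le).1 h)

/-- The Thue–Morse word: the parity of the number of ones in the binary expansion of `n`. -/
def thueMorse (n : ℕ) : Bool :=
  Nat.binaryRec false (fun b _ t => b ^^ t) n

theorem thueMorse_bit (b : Bool) (n : ℕ) : thueMorse (Nat.bit b n) = (b ^^ thueMorse n) :=
  Nat.binaryRec_eq b n (.inl rfl)

theorem mod_two_eq_one_of_thueMorse_succ_eq {n : ℕ} (h : thueMorse (n + 1) = thueMorse n) :
    n % 2 = 1 := by
  obtain ⟨a, rfl | rfl⟩ := n.even_or_odd'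
  · have h0 := thueMorse_bit false a
    have h1 := thueMorse_bit true a
    simp only [Nat.bit_val, Bool.toNat_false, Bool.toNat_true, add_zero] at h0 h1
    simp [h0, h1] at h
  · omega

/-- An overlap of even period `2m` contains, along the positions of one parity, an overlap of
period `m` of `thueMorse` itself. An overlap of odd period contains no factor `aa`, since such
factors start at odd positions only, so `thueMorse` alternates along it; but then its first and last
letters differ. -/
theorem overlapFreeSeq_thueMorse : OverlapFreeSeq thueMorse := by
  intro i k hk
  induction k using Nat.strong_induction_on generalizing i with
  | _ k ih =>
  by_contra! H
  obtain ⟨m, rfl | rfl⟩ := k.even_or_odd'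
  · obtain ⟨j, hj, hne⟩ := ih m (by omega) i.div2 (by omega)
    apply hne
    have hbit : ∀ n, i + 2 * n = Nat.bit i.bodd (i.div2 + n) := fun n => by
      conv_lhs => rw [← Nat.bit_bodd_div2 i]
      simp only [Nat.bit_val]
      ring
    have := H (2 * j) (by omega)
    rwa [hbit, add_assoc, ← mul_add, hbit, thueMorse_bit, thueMorse_bit, Bool.xor_right_inj,
      ← add_assoc] at this
  · by_cases hpair : ∃ j < 2 * m + 1, thueMorse (i + j + 1) = thueMorse (i + j)
    · obtain ⟨j, hj, heq⟩ := hpair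
      have heq' : thueMorse (i + (2 * m + 1) + j + 1) = thueMorse (i + (2 * m + 1) + j) := by
        rw [← H j hj.le, add_assoc _ j, ← H (j + 1) hj, ← add_assoc, heq]
      have := mod_two_eq_one_of_thueMorse_succ_eq heq
      have := mod_two_eq_one_of_thueMorse_succ_eq heq'
      omega
    · simp only [not_exists, not_and] at hpair
      have h0 := H 0 (Nat.zero_le _)
      rw [add_zero, add_zero, apply_add_eq_xor_bodd_of_forall_succ_ne hpair] at h0
      simp [Nat.bodd_mul] at h0

/-- The `j`-th block of three letters is `w (2j), w (2j+1)` with the separator `c` inserted after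
the first of them (`b = false`) or after both (`b = true`). -/
def insertSeparators (w : ℕ → α) : List (Bool × β) → List (α ⊕ β)
  | [] => []
  | (b, c) :: cs =>
    (if b then [.inl (w 0), .inl (w 1), .inr c] else [.inl (w 0), .inr c, .inl (w 1)]) ++
      insertSeparators (fun n => w (n + 2)) cs

theorem length_insertSeparators (w : ℕ → α) (cs : List (Bool × β)) :
    (insertSeparators w cs).length = 3 * cs.length := by
  induction cs generalizing w with
  | nil => rfl
  | cons c cs ih =>
    obtain ⟨b, c⟩ := c
    cases b <;> simp [insertSeparators, ih] <;> ring

theorem filterMap_getLeft?_insertSeparators (w : ℕ → α) (cs : List (Bool × β)) :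
    (insertSeparators w cs).filterMap Sum.getLeft? = (List.range (2 * cs.length)).map w := by
  induction cs generalizing w with
  | nil => rfl
  | cons c cs ih =>
    obtain ⟨b, c⟩ := c
    rw [List.length_cons, mul_add, mul_one, List.range_succ_eq_map, List.range_succ_eq_map]
    cases b <;> simp [insertSeparators, List.filterMap_cons, ih, List.map_map, comp_def, add_assoc]

theorem isChain_insertSeparators (w : ℕ → α) (cs : List (Bool × β)) :
    (insertSeparators w cs).IsChain fun a b => a.isLeft ∨ b.isLeft := by
  suffices h : ∀ a, (a :: insertSeparators w cs).IsChain fun a b => a.isLeft ∨ b.isLeft from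
    (h (.inl (w 0))).tail
  induction cs generalizing w with
  | nil => simp [insertSeparators]
  | cons c cs ih =>
    obtain ⟨b, c⟩ := c
    intro a
    cases b <;> simp [insertSeparators, List.isChain_cons_cons, ih]

theorem insertSeparators_injective (w : ℕ → α) :
    Injective (insertSeparators (β := β) w) := by
  intro cs ds h
  induction cs generalizing w ds with
  | nil => cases ds with
    | nil => rfl
    | cons => simpa [length_insertSeparators] using congrArg List.length h
  | cons c cs ih =>
    cases ds with
    | nil => simpa [length_insertSeparators] using congrArg List.length h
    | cons d ds =>
      obtain ⟨b, c⟩ := c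
      obtain ⟨b', d⟩ := d
      cases b <;> cases b' <;> simp [insertSeparators] at h <;> grind

theorem SqFreeSeq.sqFree_insertSeparators {w : ℕ → α} (hw : SqFreeSeq w)
    (cs : List (Bool × β)) : SqFree (insertSeparators w cs) :=
  .of_filterMap (filterMap_getLeft?_insertSeparators w cs ▸ hw.sqFree_map_range _)
    (by simpa using isChain_insertSeparators w cs)

theorem sqFreeSeq_pairCode_thueMorse : SqFreeSeq (pairCode thueMorse) :=
  overlapFreeSeq_thueMorse.sqFreeSeq_pairCode

theorem two_mul_sub_three_pow_le_sqFreeCount {x : ℕ} (hx : 3 ≤ x) (m : ℕ) :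
    (2 * (x - 3)) ^ m ≤ sqFreeCount x (3 * m) := by
  let e : Fin 3 ⊕ Fin (x - 3) ≃ Fin x := finSumFinEquiv.trans (finCongr (by omega))
  let F (v : Fin m → Bool × Fin (x - 3)) : {l : List (Fin x) // l.length = 3 * m ∧ SqFree l} :=
    ⟨(insertSeparators (pairCode thueMorse) (List.ofFn v)).map e,
      by simp [length_insertSeparators],
      (sqFreeSeq_pairCode_thueMorse.sqFree_insertSeparators _).map e.injective⟩
  have hF : Injective F := fun v v' h =>
    List.ofFn_injective <| insertSeparators_injective _ <|
      (List.map_injective_iff.mpr e.injective) (congrArg Subtype.val h)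
  have : Finite {l : List (Fin x) // l.length = 3 * m ∧ SqFree l} :=
    ((List.finite_length_eq (Fin x) (3 * m)).subset fun _ hl => hl.1).to_subtype
  calc (2 * (x - 3)) ^ m = Nat.card (Fin m → Bool × Fin (x - 3)) := by
        simp [Nat.card_eq_fintype_card]
    _ ≤ sqFreeCount x (3 * m) := Nat.card_le_card_of_injective F hF

theorem log_div_le_of_pow_le {a : ℕ → ℕ} {c L : ℝ} {k : ℕ} (hc : 0 < c) (hk : 0 < k)
    (h : ∀ m, c ^ m ≤ a (k * m))
    (hL : Tendsto (fun n : ℕ => Real.log (a n) / n) atTop (nhds L)) : Real.log c / k ≤ L := by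
  have hsub :
      Tendsto (fun m : ℕ => Real.log (a (k * m)) / ((k * m : ℕ) : ℝ)) atTop (nhds L) :=
    hL.comp (tendsto_atTop_mono (fun m => Nat.le_mul_of_pos_left m hk) tendsto_id)
  refine ge_of_tendsto hsub ((eventually_ge_atTop 1).mono fun m hm => ?_)
  have hm' : (0 : ℝ) < m := by exact_mod_cast hm
  rw [le_div_iff₀ (by positivity)]
  calc Real.log c / k * ((k * m : ℕ) : ℝ) = Real.log (c ^ m) := by
        rw [Real.log_pow]; push_cast; field_simp
    _ ≤ Real.log (a (k * m)) := Real.log_le_log (pow_pos hc m) (h m)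

/-- For `x ≥ 3`, the entropy of square-free words in `x` letters is at least
`(1/3) * log (x - 2)`; in particular it is strictly positive for `x > 3`. -/
theorem sqFree_entropy_lower_bound (x : ℕ) (hx : 3 ≤ x) (L : ℝ)
    (hL : Tendsto (fun n : ℕ => Real.log (sqFreeCount x n) / n) atTop (nhds L)) :
    (1 / 3) * Real.log ((x : ℝ) - 2) ≤ L ∧ (3 < x → 0 < L) := by
  have hbound : (1 / 3) * Real.log ((x : ℝ) - 2) ≤ L := by
    rcases hx.eq_or_lt with rfl | hx4
    · norm_num
      exact ge_of_tendsto' hL fun n => div_nonneg (Real.log_natCast_nonneg _) n.cast_nonneg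
    · have hx4' : (4 : ℝ) ≤ x := by exact_mod_cast hx4
      have hc : ∀ m, ((x : ℝ) - 2) ^ m ≤ sqFreeCount x (3 * m) := fun m =>
        calc ((x : ℝ) - 2) ^ m ≤ ((2 * (x - 3) : ℕ) : ℝ) ^ m := by
              gcongr
              · linarith
              · push_cast [Nat.cast_sub hx]; linarith
          _ ≤ sqFreeCount x (3 * m) := by exact_mod_cast two_mul_sub_three_pow_le_sqFreeCount hx m
      rw [one_div_mul_eq_div]
      exact_mod_cast log_div_le_of_pow_le (by linarith) three_pos hc hL
  refine ⟨hbound, fun hx4 => hbound.trans_lt' (mul_pos (by norm_num) (Real.log_pos ?_))⟩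
  have : (4 : ℝ) ≤ x := by exact_mod_cast hx4
  linarith
end

section
/- Let w be a square-free word over {a,b,c} containing m occurrences of the letter a. Replacing each occurrence of a independently by any letter from {a, d₁, …, d_p} (p new letters) always yields a square-free word over the enlarged alphabet; hence there are at least (p+1)^m square-free words of the same length over p+3 letters extending this construction. -/
namespace SqFreeAux

variable {α : Type*} [DecidableEq α] {p : ℕ}

open Classical in
noncomputable def proj (a : α) (d : Fin p → α) (x : α) : α :=
  if x ∈ Set.range d then a else x

lemma proj_a (a : α) (d : Fin p → α) : proj a d a = a := by
  classical
  by_cases h : a ∈ Set.range d <;> simp [proj, h]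

lemma proj_mem (a : α) (d : Fin p → α) {x : α} (h : x ∈ Set.range d) :
    proj a d x = a := by simp [proj, h]

lemma proj_not_mem (a : α) (d : Fin p → α) {x : α} (h : x ∉ Set.range d) :
    proj a d x = x := by simp [proj, h]

lemma infix_map {l₁ l₂ : List α} (f : α → α) (h : l₁ <:+: l₂) :
    l₁.map f <:+: l₂.map f := by
  obtain ⟨s, t, rfl⟩ := h
  exact ⟨s.map f, t.map f, by simp⟩

/-- embedding of `Option (Fin p)` into the alphabet -/
def emb (a : α) (d : Fin p → α) : Option (Fin p) → α
  | none => a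
  | some j => d j

lemma emb_mem (a : α) (d : Fin p → α) (o : Option (Fin p)) :
    emb a d o ∈ insert a (Set.range d) := by
  cases o with
  | none => exact Set.mem_insert _ _
  | some j => exact Set.mem_insert_of_mem _ ⟨j, rfl⟩

/-- replace the occurrences of `a` in a list according to `f` -/
def repl (a : α) (d : Fin p → α) : List α → (ℕ → Option (Fin p)) → List α
  | [], _ => []
  | x :: l, f =>
      if x = a then emb a d (f 0) :: repl a d l (fun k => f (k + 1))
      else x :: repl a d l f

lemma repl_length (a : α) (d : Fin p → α) :
    ∀ (l : List α) (f : ℕ → Option (Fin p)), (repl a d l f).length = l.length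
  | [], _ => rfl
  | x :: l, f => by
      by_cases h : x = a <;> simp [repl, h, repl_length a d l]

lemma repl_getD (a : α) (d : Fin p → α) :
    ∀ (l : List α) (f : ℕ → Option (Fin p)), ∀ i < l.length,
      (l.getD i a = a → (repl a d l f).getD i a ∈ insert a (Set.range d)) ∧
      (l.getD i a ≠ a → (repl a d l f).getD i a = l.getD i a)
  | [], _, i, hi => by simp at hi
  | x :: l, f, 0, _ => by
      by_cases h : x = a
      · refine ⟨fun _ => ?_, fun hne => absurd h (by simpa using hne)⟩
        simp only [repl, if_pos h, List.getD_cons_zero]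
        exact emb_mem a d (f 0)
      · exact ⟨fun hxa => absurd (by simpa using hxa) h, fun _ => by simp [repl, h]⟩
  | x :: l, f, i + 1, hi => by
      by_cases h : x = a <;>
        simpa [repl, h] using repl_getD a d l _ i (by simpa using hi)

lemma repl_inj (a : α) (d : Fin p → α) (hd : Function.Injective d)
    (hda : ∀ j, d j ≠ a) :
    ∀ (l : List α) (f g : ℕ → Option (Fin p)),
      repl a d l f = repl a d l g → ∀ k < l.count a, f k = g k
  | [], _, _, _, k, hk => by simp at hk
  | x :: l, f, g, h, k, hk => by
      by_cases hx : x = a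
      · simp only [repl, if_pos hx] at h
        injection h with h1 h2
        have hfg0 : f 0 = g 0 := by
          cases hf0 : f 0 <;> cases hg0 : g 0
          · rfl
          · rw [hf0, hg0] at h1; simp only [emb] at h1
            exact absurd h1.symm (hda _)
          · rw [hf0, hg0] at h1; simp only [emb] at h1
            exact absurd h1 (hda _)
          · rw [hf0, hg0] at h1; simp only [emb] at h1
            exact congrArg some (hd h1)
        cases k with
        | zero => exact hfg0
        | succ k' =>
            have hk' : k' < l.count a := by
              simpa [hx, List.count_cons] using hk
            exact repl_inj a d hd hda l _ _ h2 k' hk'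
      · simp only [repl, if_neg hx] at h
        injection h with _ h2
        exact repl_inj a d hd hda l f g h2 k
          (by simpa [List.count_cons, hx] using hk)

end SqFreeAux

open SqFreeAux in
/-- Replacing, in a square-free word over `{a,b,c}`, each occurrence of `a` independently
by any letter of `{a, d₁, …, d_p}` (new letters) yields a square-free word; hence there are
at least `(p+1)^m` square-free words of that length over the enlarged alphabet, where `m`
is the number of occurrences of `a`. -/
theorem sqFree_letter_substitution {α : Type*} [DecidableEq α] (p : ℕ) (a b c : α)
    (hab : a ≠ b) (hac : a ≠ c) (hbc : b ≠ c)
    (d : Fin p → α) (hd : Function.Injective d)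
    (hdnew : ∀ j : Fin p, d j ∉ ({a, b, c} : Set α))
    (w : List α) (hw : SqFree w) (hwabc : ∀ y ∈ w, y ∈ ({a, b, c} : Set α)) :
    (∀ w' : List α, w'.length = w.length →
      (∀ i < w.length,
        (w.getD i a = a → w'.getD i a ∈ insert a (Set.range d)) ∧
        (w.getD i a ≠ a → w'.getD i a = w.getD i a)) →
      SqFree w') ∧
    (p + 1) ^ (w.count a) ≤ Nat.card {w' : List α //
      w'.length = w.length ∧
      ∀ i < w.length,
        (w.getD i a = a → w'.getD i a ∈ insert a (Set.range d)) ∧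
        (w.getD i a ≠ a → w'.getD i a = w.getD i a)} := by
  classical
  have hda : ∀ j, d j ≠ a := fun j h => hdnew j (h ▸ Set.mem_insert _ _)
  -- Part 1 : squarefreeness
  have key : ∀ w' : List α, w'.length = w.length →
      (∀ i < w.length,
        (w.getD i a = a → w'.getD i a ∈ insert a (Set.range d)) ∧
        (w.getD i a ≠ a → w'.getD i a = w.getD i a)) →
      SqFree w' := by
    intro w' hlen hpos u hu hinf
    have hmap : w'.map (proj a d) = w := by
      apply List.ext_getElem (by simpa using hlen)
      intro i h1 h2
      rw [List.getElem_map]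
      have hi' : i < w'.length := by simpa using h1
      obtain ⟨hca, hcna⟩ := hpos i h2
      rw [List.getD_eq_getElem w' a hi', List.getD_eq_getElem w a h2] at hca hcna
      by_cases hwa : w[i] = a
      · rcases Set.mem_insert_iff.mp (hca hwa) with h | h
        · rw [h, proj_a, hwa]
        · rw [proj_mem a d h, hwa]
      · have hw_mem : w[i] ∈ ({a, b, c} : Set α) :=
          hwabc _ (List.getElem_mem h2)
        have hnr : w[i] ∉ Set.range d := by
          rintro ⟨j, hj⟩; exact hdnew j (hj ▸ hw_mem)
        rw [hcna hwa, proj_not_mem a d hnr]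
    have : (u.map (proj a d)) ++ (u.map (proj a d)) <:+: w := by
      rw [← List.map_append, ← hmap]
      exact infix_map _ hinf
    exact hw _ (by simpa using hu) this
  refine ⟨key, ?_⟩
  -- Part 2 : counting
  -- finiteness of the subtype
  haveI hfin : Finite {w' : List α //
      w'.length = w.length ∧
      ∀ i < w.length,
        (w.getD i a = a → w'.getD i a ∈ insert a (Set.range d)) ∧
        (w.getD i a ≠ a → w'.getD i a = w.getD i a)} := by
    have hSfin : (insert a (insert b (insert c (Set.range d)))).Finite :=
      (((Set.finite_range d).insert c).insert b).insert a
    haveI := hSfin.to_subtype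
    refine Finite.of_injective
      (β := Fin w.length → (insert a (insert b (insert c (Set.range d))) : Set α))
      (fun x i => ⟨x.1.getD i a, ?_⟩) ?_
    · obtain ⟨w', hlen, hpos⟩ := x
      obtain ⟨hca, hcna⟩ := hpos i i.2
      simp only [Set.mem_insert_iff]
      by_cases hwa : w.getD i a = a
      · have hh := hca hwa
        simp only [Set.mem_insert_iff, Set.mem_range] at hh
        rcases hh with h | h
        · exact Or.inl h
        · exact Or.inr (Or.inr (Or.inr (by simpa using h)))
      · have heq : w'.getD i a = w.getD i a := hcna hwa
        have hmm : w.getD i a ∈ ({a, b, c} : Set α) := by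
          rw [List.getD_eq_getElem w a i.2]
          exact hwabc _ (List.getElem_mem i.2)
        simp only [Set.mem_insert_iff, Set.mem_singleton_iff] at hmm
        show w'.getD i a = a ∨ _
        rw [heq]
        tauto
    · intro x y hxy
      apply Subtype.ext
      apply List.ext_getElem (x.2.1.trans y.2.1.symm)
      intro i hix hiy
      have hi : i < w.length := x.2.1 ▸ hix
      have h2 : x.1.getD i a = y.1.getD i a :=
        congrArg Subtype.val (congrFun hxy ⟨i, hi⟩)
      rw [List.getD_eq_getElem x.1 a hix, List.getD_eq_getElem y.1 a hiy] at h2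
      exact h2
  -- the injection from functions
  set m := w.count a with hm
  have hcard : (p + 1) ^ m = Nat.card (Fin m → Option (Fin p)) := by
    simp [Nat.card_fun, Nat.card_eq_fintype_card]
  rw [hcard]
  let ext : (Fin m → Option (Fin p)) → ℕ → Option (Fin p) :=
    fun f k => if h : k < m then f ⟨k, h⟩ else none
  have hmem : ∀ f : Fin m → Option (Fin p),
      (repl a d w (ext f)).length = w.length ∧
      ∀ i < w.length,
        ((w.getD i a = a → (repl a d w (ext f)).getD i a ∈ insert a (Set.range d)) ∧
        (w.getD i a ≠ a → (repl a d w (ext f)).getD i a = w.getD i a)) :=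
    fun f => ⟨repl_length a d w (ext f), fun i hi => repl_getD a d w (ext f) i hi⟩
  refine Nat.card_le_card_of_injective
    (fun f => ⟨repl a d w (ext f), hmem f⟩) ?_
  intro f g h
  funext k
  have h3 := repl_inj a d hd hda w (ext f) (ext g)
    (congrArg Subtype.val h) k.1 k.2
  have h4 : (if h : (k : ℕ) < m then f ⟨k, h⟩ else none)
      = (if h : (k : ℕ) < m then g ⟨k, h⟩ else none) := h3
  rw [dif_pos k.2, dif_pos k.2] at h4
  exact h4
end
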